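/- arXiv:cs/0508119 — 2 statements merged into one kernel-verified Lean document; each statement's English description precedes it below -/
import Mathlib

section
/- Let (Ȳ,Z̄,V) be random variables over finite alphabets with joint pmf p'(ȳ,v)·∏_{m=1}^{M'} q'_m(z_m|y_m), and let B* be the set of R' ∈ ℝ^{M'} with I(Ȳ_I;Z̄_I|Z̄_{I^c},V) ≤ Σ_{i∈I} R'_i for every nonempty I ⊆ {1,…,M'}. For each permutation π of {1,…,M'} let R'^{*(π)} be defined by R'^{*(π)}_{π(i)} = I(Y_{π(i)};Z_{π(i)}|Z̄_{π({1,…,i−1})},V). Then for every R' ∈ B* there exist nonnegative reals {λ_π}_{π ∈ Π} indexed by the permutations of {1,…,M'} with Σ_π λ_π = 1 such that Σ_π λ_π R'^{*(π)}_i ≤ R'_i for every i ∈ {1,…,M'}. -/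
open Finset
open scoped Classical

noncomputable section

/-- The distribution (pmf) of the random variable `X` under the pmf `P` on the finite
sample space `Ω`. -/
def dist {Ω α : Type*} [Fintype Ω] [Fintype α] (P : Ω → ℝ) (X : Ω → α) (a : α) : ℝ :=
  ∑ ω, if X ω = a then P ω else 0

/-- Shannon entropy (base 2) of the random variable `X` under the pmf `P`. -/
def Hent {Ω α : Type*} [Fintype Ω] [Fintype α] (P : Ω → ℝ) (X : Ω → α) : ℝ :=
  -∑ a, dist P X a * Real.logb 2 (dist P X a)

/-- Conditional entropy `H(X | Y)`. -/
def condEnt {Ω α β : Type*} [Fintype Ω] [Fintype α] [Fintype β]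
    (P : Ω → ℝ) (X : Ω → α) (Y : Ω → β) : ℝ :=
  Hent P (fun ω => (X ω, Y ω)) - Hent P Y

/-- Conditional mutual information `I(X ; Y | Z)`. -/
def condMI {Ω α β γ : Type*} [Fintype Ω] [Fintype α] [Fintype β] [Fintype γ]
    (P : Ω → ℝ) (X : Ω → α) (Y : Ω → β) (Z : Ω → γ) : ℝ :=
  Hent P (fun ω => (X ω, Z ω)) + Hent P (fun ω => (Y ω, Z ω))
    - Hent P (fun ω => (X ω, Y ω, Z ω)) - Hent P Z

/-- The ε-strongly typical set condition for a sequence `xs` with respect to pmf `p`: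
`|N(a|xs)/n − p(a)| < ε/|α|` for every letter `a`. -/
def StronglyTypical {α : Type*} [Fintype α] (p : α → ℝ) {n : ℕ} (xs : Fin n → α)
    (ε : ℝ) : Prop :=
  ∀ a : α, |((Finset.univ.filter fun k => xs k = a).card : ℝ) / n - p a|
    < ε / Fintype.card α

section YZV

variable {M' : ℕ}

/-- Canonical sample space for `(Ȳ, Z̄, V)`. -/
abbrev Samp (𝒴 𝒵 : Fin M' → Type*) (V : Type*) : Type _ :=
  (∀ i, 𝒴 i) × (∀ i, 𝒵 i) × V

variable {𝒴 𝒵 : Fin M' → Type*} [∀ i, Fintype (𝒴 i)] [∀ i, Fintype (𝒵 i)]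
  {V : Type*} [Fintype V]

/-- The joint pmf `p'(ȳ,v) · ∏ₘ q'ₘ(zₘ | yₘ)` on the canonical sample space: conditionally
on `(Ȳ,V)` the `Zₘ` are mutually independent and `Zₘ` depends only on `Yₘ`. -/
def Pjoint (p' : (∀ i, 𝒴 i) × V → ℝ) (q : ∀ m, 𝒴 m → 𝒵 m → ℝ) :
    Samp 𝒴 𝒵 V → ℝ :=
  fun ω => p' (ω.1, ω.2.2) * ∏ m, q m (ω.1 m) (ω.2.1 m)

/-- `Ȳ_I`. -/
def Ybar (I : Finset (Fin M')) : Samp 𝒴 𝒵 V → (∀ i : I, 𝒴 i.1) := fun ω i => ω.1 i.1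

/-- `Z̄_I`. -/
def Zbar (I : Finset (Fin M')) : Samp 𝒴 𝒵 V → (∀ i : I, 𝒵 i.1) := fun ω i => ω.2.1 i.1

/-- The pair `(Z̄_I, V)` used as a conditioning variable. -/
def ZbarV (I : Finset (Fin M')) : Samp 𝒴 𝒵 V → (∀ i : I, 𝒵 i.1) × V :=
  fun ω => (fun i => ω.2.1 i.1, ω.2.2)

/-- Membership in the region `B*`: `I(Ȳ_I; Z̄_I | Z̄_{Iᶜ}, V) ≤ Σ_{i∈I} R_i` for every
nonempty `I ⊆ {1,…,M'}`. -/
def memBstar (p' : (∀ i, 𝒴 i) × V → ℝ) (q : ∀ m, 𝒴 m → 𝒵 m → ℝ)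
    (R : Fin M' → ℝ) : Prop :=
  ∀ I : Finset (Fin M'), I.Nonempty →
    condMI (Pjoint p' q) (Ybar I) (Zbar I) (ZbarV Iᶜ) ≤ ∑ i ∈ I, R i

end YZV

/-!
Everything is governed by the set function `G(A) = H(Z̄_A, V) − Σ_{i∈A} H(Z_i | Y_i)`
(`potentialZ`). Because `Z_i` depends on the other variables only through `Y_i`, adding `Z_j`
to a collection that already determines `Y_j` raises its entropy by exactly `H(Z_j | Y_j)`.
Hence the constraint of `B*` for `I` reads `G(univ) − G(Iᶜ) ≤ Σ_{i∈I} R_i`, and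
`R'^{*(π)}_{π(i)}` is the increment of `G` along the chain `π({1,…,i})`.

If `R` dominated no convex combination of corner points, a hyperplane would separate `R` from
the closed convex set of points dominating one; that set is closed upwards, so the normal `c`
is nonnegative. Ordering the coordinates so that `c ∘ π` increases, Abel summation turns the
constraints on the suffixes of `π` into `Σ c_i R'^{*(π)}_i ≤ Σ c_i R_i`, a contradiction.
-/

section Entropy

variable {Ω α β : Type*} [Fintype Ω] [Fintype α] [Fintype β]

theorem sum_dist_mul (P : Ω → ℝ) (X : Ω → α) (F : α → ℝ) :
    ∑ a, dist P X a * F a = ∑ ω, P ω * F (X ω) := by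
  simp only [_root_.dist, Finset.sum_mul, ite_mul, zero_mul]
  rw [Finset.sum_comm]
  simp

theorem Hent_eq_sum_negMulLog (P : Ω → ℝ) (X : Ω → α) :
    Hent P X = (∑ a, Real.negMulLog (dist P X a)) / Real.log 2 := by
  simp only [Hent, Real.negMulLog, Real.logb, Finset.sum_div, ← Finset.sum_neg_distrib]
  exact Finset.sum_congr rfl fun a _ => by ring

theorem Hent_eq_neg_sum_logb (P : Ω → ℝ) (X : Ω → α) :
    Hent P X = -∑ ω, P ω * Real.logb 2 (∑ ω', if X ω' = X ω then P ω' else 0) := by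
  rw [Hent, sum_dist_mul]
  rfl

theorem Hent_congr (P : Ω → ℝ) {X : Ω → α} {Y : Ω → β}
    (h : ∀ ω₁ ω₂, X ω₁ = X ω₂ ↔ Y ω₁ = Y ω₂) : Hent P X = Hent P Y := by
  simp only [Hent_eq_neg_sum_logb, h]

theorem Hent_prod_eq_of_dist_eq_mul (P : Ω → ℝ) (X : Ω → α) (W : Ω → β) (k : α → β → ℝ)
    (hk : ∀ a, ∑ b, k a b = 1)
    (hf : ∀ a b, dist P (fun ω => (X ω, W ω)) (a, b) = dist P X a * k a b) :
    Hent P (fun ω => (X ω, W ω))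
      = Hent P X + (∑ a, dist P X a * ∑ b, Real.negMulLog (k a b)) / Real.log 2 := by
  simp only [Hent_eq_sum_negMulLog, Fintype.sum_prod_type, hf, Real.negMulLog_mul,
    Finset.sum_add_distrib, ← Finset.sum_mul, ← Finset.mul_sum, hk, one_mul, add_div]

end Entropy

section Resampling

variable {M' : ℕ} {𝒴 𝒵 : Fin M' → Type*} {V : Type*}

def updZ (j : Fin M') (s : 𝒵 j) (ω : Samp 𝒴 𝒵 V) : Samp 𝒴 𝒵 V :=
  (ω.1, Function.update ω.2.1 j s, ω.2.2)

theorem Pjoint_updZ_mul (p' : (∀ i, 𝒴 i) × V → ℝ) (q : ∀ m, 𝒴 m → 𝒵 m → ℝ)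
    (j : Fin M') (s : 𝒵 j) (ω : Samp 𝒴 𝒵 V) :
    Pjoint p' q (updZ j s ω) * q j (ω.1 j) (ω.2.1 j) = Pjoint p' q ω * q j (ω.1 j) s := by
  simp only [Pjoint, updZ, ← Finset.mul_prod_erase Finset.univ _ (Finset.mem_univ j),
    Function.update_self]
  rw [Finset.prod_congr rfl fun m hm =>
    by rw [Function.update_of_ne (Finset.ne_of_mem_erase hm)]]
  ring

theorem Ybar_eq_iff (T : Finset (Fin M')) (ω₁ ω₂ : Samp 𝒴 𝒵 V) :
    Ybar T ω₁ = Ybar T ω₂ ↔ ∀ i ∈ T, ω₁.1 i = ω₂.1 i := by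
  simp [Ybar, funext_iff]

theorem Zbar_eq_iff (T : Finset (Fin M')) (ω₁ ω₂ : Samp 𝒴 𝒵 V) :
    Zbar T ω₁ = Zbar T ω₂ ↔ ∀ i ∈ T, ω₁.2.1 i = ω₂.2.1 i := by
  simp [Zbar, funext_iff]

theorem ZbarV_eq_iff (U : Finset (Fin M')) (ω₁ ω₂ : Samp 𝒴 𝒵 V) :
    ZbarV U ω₁ = ZbarV U ω₂ ↔ (∀ i ∈ U, ω₁.2.1 i = ω₂.2.1 i) ∧ ω₁.2.2 = ω₂.2.2 := by
  simp [ZbarV, funext_iff]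

variable [∀ i, Fintype (𝒴 i)] [∀ i, Fintype (𝒵 i)] [Fintype V]

theorem sum_ite_Z_eq_sum_updZ (j : Fin M') (F : Samp 𝒴 𝒵 V → ℝ) (s t : 𝒵 j) :
    ∑ ω : Samp 𝒴 𝒵 V, (if ω.2.1 j = t then F ω else 0)
      = ∑ ω : Samp 𝒴 𝒵 V, (if ω.2.1 j = s then F (updZ j t ω) else 0) := by
  -- reindex by the involution exchanging the values `s` and `t` of the coordinate `Z_j`
  let e : Samp 𝒴 𝒵 V → Samp 𝒴 𝒵 V := fun ω => updZ j (Equiv.swap s t (ω.2.1 j)) ω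
  have he : Function.Involutive e := fun ω => by
    simp [e, updZ]
  rw [← Equiv.sum_comp (he.toPerm e)]
  refine Finset.sum_congr rfl fun ω _ => ?_
  simp only [Function.Involutive.coe_toPerm, e, updZ, Function.update_self,
    Equiv.swap_apply_eq_iff, Equiv.swap_apply_right]
  split_ifs with h <;> simp [h]

theorem dist_prod_Z_eq_mul (p' : (∀ i, 𝒴 i) × V → ℝ) (q : ∀ m, 𝒴 m → 𝒵 m → ℝ)
    (hq1 : ∀ m y, ∑ z, q m y z = 1) {α : Type*} [Fintype α]
    (j : Fin M') (X : Samp 𝒴 𝒵 V → α) (g : α → 𝒴 j)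
    (hX : ∀ s ω, X (updZ j s ω) = X ω) (hg : ∀ ω, g (X ω) = ω.1 j) (a : α) (t : 𝒵 j) :
    dist (Pjoint p' q) (fun ω => (X ω, ω.2.1 j)) (a, t)
      = dist (Pjoint p' q) X a * q j (g a) t := by
  set P := Pjoint p' q
  calc dist P (fun ω => (X ω, ω.2.1 j)) (a, t)
      = ∑ s, ∑ ω, if ω.2.1 j = t then (if X ω = a then P ω else 0) * q j (ω.1 j) s
          else 0 := by
        rw [Finset.sum_comm]
        refine Finset.sum_congr rfl fun ω _ => ?_
        by_cases ht : ω.2.1 j = t <;> by_cases ha : X ω = a <;>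
          simp [ht, ha, ← Finset.mul_sum, hq1]
    _ = ∑ s, ∑ ω, if ω.2.1 j = s then (if X ω = a then P ω else 0) * q j (ω.1 j) t
          else 0 := by
        refine Finset.sum_congr rfl fun s _ => ?_
        rw [sum_ite_Z_eq_sum_updZ j _ s t]
        refine Finset.sum_congr rfl fun ω _ => ?_
        rw [hX]
        split_ifs with hs ha
        · rw [← hs]
          exact Pjoint_updZ_mul p' q j t ω
        · simp
        · rfl
    _ = dist P X a * q j (g a) t := by
        rw [Finset.sum_comm]
        simp only [Finset.sum_ite_eq, Finset.mem_univ, if_true, _root_.dist, Finset.sum_mul]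
        refine Finset.sum_congr rfl fun ω _ => ?_
        split_ifs with h
        · rw [← h, hg]
        · simp

end Resampling

section Identities

variable {M' : ℕ} {𝒴 𝒵 : Fin M' → Type*} [∀ i, Fintype (𝒴 i)] [∀ i, Fintype (𝒵 i)]
  {V : Type*} [Fintype V] (p' : (∀ i, 𝒴 i) × V → ℝ) (q : ∀ m, 𝒴 m → 𝒵 m → ℝ)

theorem Hent_prod_Z_eq_add_sum (hq1 : ∀ m y, ∑ z, q m y z = 1) {α : Type*} [Fintype α]
    (j : Fin M') (X : Samp 𝒴 𝒵 V → α) (g : α → 𝒴 j)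
    (hX : ∀ s ω, X (updZ j s ω) = X ω) (hg : ∀ ω, g (X ω) = ω.1 j) :
    Hent (Pjoint p' q) (fun ω => (X ω, ω.2.1 j)) = Hent (Pjoint p' q) X
      + (∑ ω, Pjoint p' q ω * ∑ t, Real.negMulLog (q j (ω.1 j) t)) / Real.log 2 := by
  rw [Hent_prod_eq_of_dist_eq_mul _ X _ (fun a t => q j (g a) t) (fun a => hq1 j (g a))
    (dist_prod_Z_eq_mul p' q hq1 j X g hX hg), sum_dist_mul]
  simp only [hg]

theorem Hent_prod_Z_eq_add_condEnt (hq1 : ∀ m y, ∑ z, q m y z = 1) {α : Type*} [Fintype α]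
    (j : Fin M') (X : Samp 𝒴 𝒵 V → α) (g : α → 𝒴 j)
    (hX : ∀ s ω, X (updZ j s ω) = X ω) (hg : ∀ ω, g (X ω) = ω.1 j) :
    Hent (Pjoint p' q) (fun ω => (X ω, ω.2.1 j)) = Hent (Pjoint p' q) X
      + condEnt (Pjoint p' q) (fun ω => ω.2.1 j) (fun ω => ω.1 j) := by
  have hswap : Hent (Pjoint p' q) (fun ω : Samp 𝒴 𝒵 V => (ω.2.1 j, ω.1 j))
      = Hent (Pjoint p' q) (fun ω : Samp 𝒴 𝒵 V => (ω.1 j, ω.2.1 j)) :=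
    Hent_congr _ fun _ _ => by simp [and_comm]
  rw [condEnt, hswap, Hent_prod_Z_eq_add_sum p' q hq1 j X g hX hg,
    Hent_prod_Z_eq_add_sum p' q hq1 j (fun ω => ω.1 j) id (fun _ _ => rfl) (fun _ => rfl)]
  ring

theorem Hent_Ybar_ZbarV_insert (hq1 : ∀ m y, ∑ z, q m y z = 1) {T U : Finset (Fin M')}
    {j : Fin M'} (hjT : j ∈ T) (hjU : j ∉ U) :
    Hent (Pjoint p' q) (fun ω => (Ybar T ω, ZbarV (insert j U) ω))
      = Hent (Pjoint p' q) (fun ω => (Ybar T ω, ZbarV U ω))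
        + condEnt (Pjoint p' q) (fun ω : Samp 𝒴 𝒵 V => ω.2.1 j) (fun ω => ω.1 j) := by
  have hX : ∀ (s : 𝒵 j) (ω : Samp 𝒴 𝒵 V),
      (Ybar T (updZ j s ω), ZbarV U (updZ j s ω)) = (Ybar T ω, ZbarV U ω) :=
    fun s ω => by
      simp only [Prod.mk.injEq, Ybar_eq_iff, ZbarV_eq_iff, updZ]
      exact ⟨fun _ _ => trivial,
        fun i hi => Function.update_of_ne (ne_of_mem_of_not_mem hi hjU) _ _, trivial⟩
  rw [← Hent_prod_Z_eq_add_condEnt p' q hq1 j _ (fun a => a.1 ⟨j, hjT⟩) hX (fun _ => rfl)]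
  refine Hent_congr _ fun ω₁ ω₂ => ?_
  simp only [Prod.mk.injEq, Ybar_eq_iff, ZbarV_eq_iff, Finset.forall_mem_insert]
  tauto

theorem Hent_Ybar_ZbarV_union (hq1 : ∀ m y, ∑ z, q m y z = 1) {T U W : Finset (Fin M')}
    (hWT : W ⊆ T) (hUW : Disjoint U W) :
    Hent (Pjoint p' q) (fun ω => (Ybar T ω, ZbarV (U ∪ W) ω))
      = Hent (Pjoint p' q) (fun ω => (Ybar T ω, ZbarV U ω))
        + ∑ i ∈ W, condEnt (Pjoint p' q) (fun ω : Samp 𝒴 𝒵 V => ω.2.1 i) (fun ω => ω.1 i) := by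
  induction W using Finset.induction_on with
  | empty => rw [Finset.union_empty, Finset.sum_empty, add_zero]
  | @insert a W haW ih =>
    rw [Finset.insert_subset_iff] at hWT
    rw [Finset.disjoint_insert_right] at hUW
    rw [Finset.union_insert, Hent_Ybar_ZbarV_insert p' q hq1 hWT.1
      (by simpa [not_or] using And.intro hUW.1 haW), ih hWT.2 hUW.2, Finset.sum_insert haW]
    ring

def potentialZ (A : Finset (Fin M')) : ℝ :=
  Hent (Pjoint p' q) (ZbarV (𝒴 := 𝒴) A)
    - ∑ i ∈ A, condEnt (Pjoint p' q) (fun ω : Samp 𝒴 𝒵 V => ω.2.1 i) (fun ω => ω.1 i)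

theorem condMI_Ybar_Zbar_eq (hq1 : ∀ m y, ∑ z, q m y z = 1) (S : Finset (Fin M')) :
    condMI (Pjoint p' q) (Ybar S) (Zbar S) (ZbarV (𝒴 := 𝒴) (V := V) Sᶜ)
      = potentialZ p' q univ - potentialZ p' q Sᶜ := by
  have hZ : Hent (Pjoint p' q) (fun ω => (Zbar S ω, ZbarV Sᶜ ω))
      = Hent (Pjoint p' q) (ZbarV (𝒴 := 𝒴) (V := V) univ) := by
    rw [← Finset.union_compl S]
    refine Hent_congr _ fun ω₁ ω₂ => ?_
    simp only [Prod.mk.injEq, Zbar_eq_iff, ZbarV_eq_iff, Finset.forall_mem_union, and_assoc]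
  have hYZ : Hent (Pjoint p' q) (fun ω => (Ybar S ω, Zbar S ω, ZbarV Sᶜ ω))
      = Hent (Pjoint p' q) (fun ω => (Ybar (𝒴 := 𝒴) (V := V) S ω, ZbarV (Sᶜ ∪ S) ω)) := by
    refine Hent_congr _ fun ω₁ ω₂ => ?_
    simp only [Prod.mk.injEq, Ybar_eq_iff, Zbar_eq_iff, ZbarV_eq_iff, Finset.forall_mem_union]
    tauto
  rw [condMI, hZ, hYZ, Hent_Ybar_ZbarV_union p' q hq1 subset_rfl disjoint_compl_left,
    potentialZ, potentialZ, ← Finset.sum_add_sum_compl S]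
  ring

theorem condMI_Y_Z_eq (hq1 : ∀ m y, ∑ z, q m y z = 1) {j : Fin M'} {A : Finset (Fin M')}
    (hjA : j ∉ A) :
    condMI (Pjoint p' q) (fun ω : Samp 𝒴 𝒵 V => ω.1 j) (fun ω => ω.2.1 j) (ZbarV A)
      = potentialZ p' q (insert j A) - potentialZ p' q A := by
  have hZ : Hent (Pjoint p' q) (fun ω => (ω.2.1 j, ZbarV A ω))
      = Hent (Pjoint p' q) (ZbarV (𝒴 := 𝒴) (V := V) (insert j A)) := by
    refine Hent_congr _ fun ω₁ ω₂ => ?_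
    simp only [Prod.mk.injEq, ZbarV_eq_iff, Finset.forall_mem_insert, and_assoc]
  have hYZ : Hent (Pjoint p' q) (fun ω : Samp 𝒴 𝒵 V => (ω.1 j, ω.2.1 j, ZbarV A ω))
      = Hent (Pjoint p' q) (fun ω => ((ω.1 j, ZbarV A ω), ω.2.1 j)) := by
    refine Hent_congr _ fun ω₁ ω₂ => ?_
    simp only [Prod.mk.injEq]
    tauto
  have hX : ∀ (s : 𝒵 j) (ω : Samp 𝒴 𝒵 V), (ω.1 j, ZbarV A (updZ j s ω)) = (ω.1 j, ZbarV A ω) :=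
    fun s ω => by
      simp only [Prod.mk.injEq, ZbarV_eq_iff, updZ]
      exact ⟨trivial, fun i hi => Function.update_of_ne (ne_of_mem_of_not_mem hi hjA) _ _, trivial⟩
  rw [condMI, hZ, hYZ, Hent_prod_Z_eq_add_condEnt p' q hq1 j _ Prod.fst hX (fun _ => rfl),
    potentialZ, potentialZ, Finset.sum_insert hjA]
  ring

end Identities

theorem mul_sub_le_sum_mul_sub {n : ℕ} (c : Fin n → ℝ) (hc : Monotone c) (a : ℝ)
    (ha : ∀ i, a ≤ c i) (D : ℕ → ℝ) (hD : ∀ m ≤ n, D m ≤ D n) :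
    a * (D n - D 0) ≤ ∑ i : Fin n, c i * (D (i + 1) - D i) := by
  induction n generalizing a D with
  | zero => simp
  | succ n ih =>
    have ih' := ih (c ∘ Fin.succ) (hc.comp Fin.strictMono_succ.monotone) (c 0)
      (fun i => hc (Fin.zero_le _)) (fun k => D (k + 1)) (fun m hm => hD (m + 1) (by omega))
    simp only [Function.comp_apply, Nat.zero_add] at ih'
    rw [Fin.sum_univ_succ]
    simp only [Fin.val_succ, Fin.val_zero, Nat.zero_add]
    have hlow : a * (D (n + 1) - D 0) ≤ c 0 * (D (n + 1) - D 0) :=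
      mul_le_mul_of_nonneg_right (ha 0) (sub_nonneg.2 (hD 0 (Nat.zero_le _)))
    linarith

def permPrefix {n : ℕ} (π : Equiv.Perm (Fin n)) (k : ℕ) : Finset (Fin n) :=
  (univ.filter fun j : Fin n => (j : ℕ) < k).image π

theorem permPrefix_succ {n : ℕ} (π : Equiv.Perm (Fin n)) (i : Fin n) :
    permPrefix π (i + 1) = insert (π i) (permPrefix π i) := by
  ext x
  simp only [permPrefix, Finset.mem_image, Finset.mem_filter, Finset.mem_univ, true_and,
    Finset.mem_insert, Nat.lt_succ_iff_lt_or_eq, or_and_right, exists_or, Fin.val_inj]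
  rw [or_comm]
  simp [eq_comm]

theorem apply_notMem_permPrefix {n : ℕ} (π : Equiv.Perm (Fin n)) (i : Fin n) :
    π i ∉ permPrefix π i := by
  simp [permPrefix]

theorem permPrefix_self {n : ℕ} (π : Equiv.Perm (Fin n)) : permPrefix π n = univ :=
  Finset.eq_univ_of_forall fun x =>
    Finset.mem_image.2 ⟨π.symm x, by simp, π.apply_symm_apply x⟩

theorem sum_mul_le_of_permPrefix {n : ℕ} (G : Finset (Fin n) → ℝ) (R : Fin n → ℝ)
    (hR : ∀ S : Finset (Fin n), S.Nonempty → G univ - G Sᶜ ≤ ∑ i ∈ S, R i)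
    (π : Equiv.Perm (Fin n)) (r : Fin n → ℝ)
    (hr : ∀ i, r (π i) = G (insert (π i) (permPrefix π i)) - G (permPrefix π i))
    (c : Fin n → ℝ) (hc : ∀ i, 0 ≤ c i) (hcπ : Monotone (c ∘ π)) :
    ∑ i, c i * r i ≤ ∑ i, c i * R i := by
  set D : ℕ → ℝ := fun k => ∑ i ∈ permPrefix π k, R i - G (permPrefix π k)
  have hstep : ∀ i : Fin n, R (π i) - r (π i) = D (i + 1) - D i := fun i => by
    simp only [D, permPrefix_succ, Finset.sum_insert (apply_notMem_permPrefix π i), hr]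
    ring
  have hD : ∀ m ≤ n, D m ≤ D n := fun m _ => by
    simp only [D, permPrefix_self]
    rcases (permPrefix π m)ᶜ.eq_empty_or_nonempty with h | h
    · rw [(Finset.compl_eq_empty_iff _).1 h]
    · have := hR _ h
      rw [compl_compl] at this
      linarith [Finset.sum_add_sum_compl (permPrefix π m) R]
  have key := mul_sub_le_sum_mul_sub (c ∘ π) hcπ 0 (fun i => hc _) D hD
  simp only [Function.comp_apply, zero_mul, ← hstep] at key
  rw [Equiv.sum_comp π fun i => c i * (R i - r i)] at key
  simpa only [mul_sub, Finset.sum_sub_distrib, sub_nonneg] using key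

open Pointwise in
theorem exists_convexComb_le_of_forall_nonneg {ι κ : Type*} [Fintype ι] [Fintype κ]
    (x : κ → ι → ℝ) (y : ι → ℝ)
    (h : ∀ c : ι → ℝ, (∀ i, 0 ≤ c i) → ∃ k, ∑ i, c i * x k i ≤ ∑ i, c i * y i) :
    ∃ lam : κ → ℝ, (∀ k, 0 ≤ lam k) ∧ ∑ k, lam k = 1 ∧ ∀ i, ∑ k, lam k * x k i ≤ y i := by
  set L := Fintype.linearCombination ℝ x
  set C : Set (ι → ℝ) := L '' stdSimplex ℝ κ + Set.Ici (0 : ι → ℝ)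
  by_contra hy
  have hyC : y ∉ C := by
    rintro ⟨_, ⟨lam, ⟨h0, h1⟩, rfl⟩, d, hd, rfl⟩
    refine hy ⟨lam, h0, h1, fun i => ?_⟩
    have := hd i
    simp_all [L, Fintype.linearCombination_apply]
  have hconv : Convex ℝ C := ((convex_stdSimplex ℝ κ).linear_image L).add (convex_Ici 0)
  have hclosed : IsClosed C := isClosed_Ici.add_left_of_isCompact
    ((isCompact_stdSimplex ℝ κ).image L.continuous_of_finiteDimensional)
  obtain ⟨f, u, hfy, hfC⟩ := geometric_hahn_banach_point_closed hconv hclosed hyC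
  have hfx : ∀ k (d : ι → ℝ), 0 ≤ d → u < f (x k + d) := fun k d hd =>
    hfC _ ⟨x k, ⟨Pi.single k 1, single_mem_stdSimplex ℝ k, by simp [L]⟩, d, hd, rfl⟩
  set e : ι → ι → ℝ := fun i j => if i = j then 1 else 0
  have hf : ∀ v, f v = ∑ i, f (e i) * v i := fun v => by
    simpa [e, mul_comm] using (f : (ι → ℝ) →ₗ[ℝ] ℝ).pi_apply_eq_sum_univ v
  obtain ⟨k₀, -⟩ := h 0 fun _ => le_rfl
  have hu : u < f (x k₀) := by simpa using hfx k₀ 0 le_rfl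
  -- `C` is closed upwards, so a separating functional has nonnegative coefficients
  have hc : ∀ i, 0 ≤ f (e i) := fun i => by
    by_contra! hneg
    have he : 0 ≤ e i := fun j => by simp only [e]; split_ifs <;> norm_num
    have hlt := hfx k₀ (((f (x k₀) - u) / -f (e i)) • e i)
      (smul_nonneg (div_nonneg (by linarith) (by linarith)) he)
    rw [map_add, map_smul, smul_eq_mul, div_mul_eq_mul_div, div_neg, mul_div_assoc,
      div_self hneg.ne, mul_one] at hlt
    linarith
  obtain ⟨k, hk⟩ := h (fun i => f (e i)) hc
  have := hfx k 0 le_rfl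
  rw [add_zero, hf] at this
  rw [hf] at hfy
  linarith

theorem statement_2_general (M' : ℕ) (𝒴 𝒵 : Fin M' → Type) [∀ i, Fintype (𝒴 i)]
    [∀ i, Fintype (𝒵 i)] (V : Type) [Fintype V]
    (p' : (∀ i, 𝒴 i) × V → ℝ) (q : ∀ m, 𝒴 m → 𝒵 m → ℝ)
    (hq1 : ∀ m y, ∑ z, q m y z = 1)
    (Rstar : Equiv.Perm (Fin M') → Fin M' → ℝ)
    (hRstar : ∀ (π : Equiv.Perm (Fin M')) (i : Fin M'),
      Rstar π (π i) = condMI (Pjoint p' q)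
        (fun ω : Samp 𝒴 𝒵 V => ω.1 (π i))
        (fun ω : Samp 𝒴 𝒵 V => ω.2.1 (π i))
        (ZbarV ((Finset.univ.filter fun j : Fin M' => j < i).image π)))
    (R : Fin M' → ℝ) (hR : memBstar p' q R) :
    ∃ lam : Equiv.Perm (Fin M') → ℝ,
      (∀ π, 0 ≤ lam π) ∧ (∑ π, lam π = 1) ∧
        ∀ i : Fin M', ∑ π, lam π * Rstar π i ≤ R i := by
  refine exists_convexComb_le_of_forall_nonneg Rstar R fun c hc => ⟨Tuple.sort c, ?_⟩
  refine sum_mul_le_of_permPrefix (potentialZ p' q) R (fun S hS => ?_) _ _ (fun i => ?_) c hc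
    (Tuple.monotone_sort c)
  · rw [← condMI_Ybar_Zbar_eq p' q hq1]
    exact hR S hS
  · rw [hRstar, ← condMI_Y_Z_eq p' q hq1 (apply_notMem_permPrefix _ i)]
    -- the two filters differ only in their decidability instances
    congr 3

/-- Equation (4.6) of the paper: every `R' ∈ B*` dominates a convex combination of the
`M'!` corner points `R'^{*(π)}`, where `R'^{*(π)}_{π(i)} = I(Y_{π(i)}; Z_{π(i)} |
Z̄_{π({1,…,i−1})}, V)`. -/
theorem statement_2 (M' : ℕ) (𝒴 𝒵 : Fin M' → Type) [∀ i, Fintype (𝒴 i)]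
    [∀ i, Fintype (𝒵 i)] (V : Type) [Fintype V]
    (p' : (∀ i, 𝒴 i) × V → ℝ) (q : ∀ m, 𝒴 m → 𝒵 m → ℝ)
    (hp'0 : ∀ yv, 0 ≤ p' yv) (hp'1 : ∑ yv, p' yv = 1)
    (hq0 : ∀ m y z, 0 ≤ q m y z) (hq1 : ∀ m y, ∑ z, q m y z = 1)
    (Rstar : Equiv.Perm (Fin M') → Fin M' → ℝ)
    (hRstar : ∀ (π : Equiv.Perm (Fin M')) (i : Fin M'),
      Rstar π (π i) = condMI (Pjoint p' q)
        (fun ω : Samp 𝒴 𝒵 V => ω.1 (π i))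
        (fun ω : Samp 𝒴 𝒵 V => ω.2.1 (π i))
        (ZbarV ((Finset.univ.filter fun j : Fin M' => j < i).image π)))
    (R : Fin M' → ℝ) (hR : memBstar p' q R) :
    ∃ lam : Equiv.Perm (Fin M') → ℝ,
      (∀ π, 0 ≤ lam π) ∧ (∑ π, lam π = 1) ∧
        ∀ i : Fin M', ∑ π, lam π * Rstar π i ≤ R i :=
  statement_2_general M' 𝒴 𝒵 V p' q hq1 Rstar hRstar R hR
end
end

section
/- Let (Ȳ,Z̄,V) be random variables over finite alphabets with joint pmf p'(ȳ,v)·∏_{m=1}^{M'} q'_m(z_m|y_m). Then for any two disjoint nonempty sets I, I' ⊆ {1,…,M'}: I(Ȳ_I;Z̄_I|Z̄_{(I∪I')^c},V) = I(Ȳ_I;Z̄_I|Z̄_{I^c},V) + I(Z̄_I;Z̄_{I'}|Z̄_{(I∪I')^c},V). -/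
open Finset
open scoped Classical

noncomputable section

/-!
Given `Ȳ_I`, the block `Z̄_I` has law `∏_{i ∈ I} q'_i(y_i, ·)` no matter which coordinates
`Z̄_S` with `S` disjoint from `I` (and `V`) are added to the conditioning, because the
channels act independently. Hence `H(Z̄_I | Ȳ_I, Z̄_S, V)` takes the same value for
`S = (I ∪ I')ᶜ` and `S = Iᶜ`. Expanding the three mutual informations into entropies, and
reading `(Z̄_{I'}, Z̄_{(I ∪ I')ᶜ})` as a relabelling of `Z̄_{Iᶜ}`, the identity reduces to
this equality.
-/

section Entropy

variable {Ω Ω' α β γ : Type*} [Fintype Ω] [Fintype Ω'] [Fintype α] [Fintype β] [Fintype γ]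

lemma Hent_eq_neg_sum_mul_logb_dist (P : Ω → ℝ) (X : Ω → α) :
    Hent P X = -∑ ω, P ω * Real.logb 2 (dist P X (X ω)) := by
  rw [Hent, ← Finset.sum_fiberwise Finset.univ X]
  congr 1
  refine Finset.sum_congr rfl fun a _ => ?_
  rw [Finset.sum_congr rfl fun ω hω => by rw [(Finset.mem_filter.1 hω).2], ← Finset.sum_mul]
  congr 1
  rw [_root_.dist, Finset.sum_ite, Finset.sum_const_zero, add_zero]

lemma self_le_dist {P : Ω → ℝ} (hP : ∀ ω, 0 ≤ P ω) (X : Ω → α) (ω : Ω) :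
    P ω ≤ dist P X (X ω) := by
  simpa [_root_.dist] using Finset.single_le_sum (f := fun ω' => if X ω' = X ω then P ω' else 0)
    (fun ω' _ => ite_nonneg (hP ω') le_rfl) (Finset.mem_univ ω)

lemma dist_comp_of_injective (P : Ω → ℝ) (X : Ω → α) {f : α → β} (hf : f.Injective) (a : α) :
    dist P (fun ω => f (X ω)) (f a) = dist P X a := by
  simp only [_root_.dist, hf.eq_iff]

lemma Hent_comp_of_injective (P : Ω → ℝ) (X : Ω → α) {f : α → β} (hf : f.Injective) :
    Hent P (fun ω => f (X ω)) = Hent P X := by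
  simp only [Hent_eq_neg_sum_mul_logb_dist, dist_comp_of_injective P X hf]

lemma dist_comp_equiv (e : Ω ≃ Ω') (P : Ω' → ℝ) (X : Ω' → α) (a : α) :
    dist (P ∘ e) (X ∘ e) a = dist P X a :=
  e.sum_comp fun ω => if X ω = a then P ω else 0

lemma dist_prod_eq_kernel_mul (f : α → ℝ) (X : α → γ) {κ : γ → β → ℝ}
    (hκ : ∀ c, ∑ b, κ c b = 1) (c : γ) (b : β) :
    dist (fun ω : α × β => f ω.1 * κ (X ω.1) ω.2) (fun ω => (X ω.1, ω.2)) (c, b)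
      = κ c b * dist (fun ω : α × β => f ω.1 * κ (X ω.1) ω.2) (fun ω => X ω.1) c := by
  simp only [_root_.dist, Fintype.sum_prod_type, Prod.mk.injEq, Finset.mul_sum]
  refine Finset.sum_congr rfl fun x _ => ?_
  by_cases hx : X x = c
  · simp [hx, ← Finset.mul_sum, hκ, mul_comm]
  · simp [hx]

lemma Hent_sub_Hent_of_dist_eq_mul {P : Ω → ℝ} (hP : ∀ ω, 0 ≤ P ω) (A : Ω → α) (B : Ω → β)
    (g : Ω → ℝ) (h : ∀ ω, dist P A (A ω) = g ω * dist P B (B ω)) :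
    Hent P A - Hent P B = -∑ ω, P ω * Real.logb 2 (g ω) := by
  rw [Hent_eq_neg_sum_mul_logb_dist, Hent_eq_neg_sum_mul_logb_dist, neg_sub_neg,
    ← Finset.sum_sub_distrib, ← Finset.sum_neg_distrib]
  refine Finset.sum_congr rfl fun ω _ => ?_
  rcases (hP ω).eq_or_lt with hPω | hPω
  · simp [← hPω]
  have hA : g ω * dist P B (B ω) ≠ 0 := h ω ▸ (hPω.trans_le (self_le_dist hP A ω)).ne'
  rw [h, Real.logb_mul (left_ne_zero_of_mul hA) (right_ne_zero_of_mul hA)]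
  ring

end Entropy

section YZVChain

variable {M' : ℕ} {𝒴 𝒵 : Fin M' → Type*} {V : Type*}

lemma Pjoint_nonneg {p' : (∀ i, 𝒴 i) × V → ℝ} {q : ∀ m, 𝒴 m → 𝒵 m → ℝ}
    (hp'0 : ∀ yv, 0 ≤ p' yv) (hq0 : ∀ m y z, 0 ≤ q m y z) (ω : Samp 𝒴 𝒵 V) :
    0 ≤ Pjoint p' q ω :=
  mul_nonneg (hp'0 _) (Finset.prod_nonneg fun m _ => hq0 m _ _)

lemma exists_injective_comp_ZbarV_of_union_eq {T₁ T₂ K : Finset (Fin M')}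
    (h : T₁ ∪ T₂ = K) :
    ∃ g : (∀ i : K, 𝒵 i) × V → (∀ i : T₁, 𝒵 i) × (∀ i : T₂, 𝒵 i) × V,
      g.Injective ∧ ∀ ω : Samp 𝒴 𝒵 V, g (ZbarV K ω) = (Zbar T₁ ω, ZbarV T₂ ω) := by
  refine ⟨fun x => (fun i => x.1 ⟨i, h ▸ Finset.mem_union_left _ i.2⟩,
    fun i => x.1 ⟨i, h ▸ Finset.mem_union_right _ i.2⟩, x.2), fun x y hxy => ?_, fun _ => rfl⟩
  simp only [Prod.mk.injEq, funext_iff] at hxy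
  refine Prod.ext (funext fun ⟨i, hi⟩ => ?_) hxy.2.2
  rcases Finset.mem_union.1 (h ▸ hi) with h₁ | h₂
  · exact hxy.1 ⟨i, h₁⟩
  · exact hxy.2.1 ⟨i, h₂⟩

def splitZbar (I : Finset (Fin M')) :
    Samp 𝒴 𝒵 V ≃ ((∀ i, 𝒴 i) × (∀ i : {m // m ∉ I}, 𝒵 i) × V) × (∀ i : I, 𝒵 i) where
  toFun ω := ((ω.1, fun i => ω.2.1 i, ω.2.2), fun i => ω.2.1 i)
  invFun x := (x.1.1, (Equiv.piEquivPiSubtypeProd (· ∈ I) 𝒵).symm (x.2, x.1.2.1), x.1.2.2)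
  left_inv ω := Prod.ext rfl
    (Prod.ext ((Equiv.piEquivPiSubtypeProd (· ∈ I) 𝒵).symm_apply_apply ω.2.1) rfl)
  right_inv x := by
    refine Prod.ext (Prod.ext rfl (Prod.ext ?_ rfl)) ?_ <;> funext i <;> simp [i.2]

variable [∀ i, Fintype (𝒴 i)] [∀ i, Fintype (𝒵 i)] [Fintype V]

lemma dist_Ybar_Zbar_ZbarV_eq_prod_mul (p' : (∀ i, 𝒴 i) × V → ℝ) {q : ∀ m, 𝒴 m → 𝒵 m → ℝ}
    (hq1 : ∀ m y, ∑ z, q m y z = 1) {I S : Finset (Fin M')} (hIS : Disjoint I S)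
    (a : ∀ i : I, 𝒴 i) (b : ∀ i : I, 𝒵 i) (c : (∀ i : S, 𝒵 i) × V) :
    dist (Pjoint p' q) (fun ω => (Ybar I ω, Zbar I ω, ZbarV S ω)) (a, b, c)
      = (∏ i : I, q i (a i) (b i))
        * dist (Pjoint p' q) (fun ω => (Ybar I ω, ZbarV S ω)) (a, c) := by
  let X : ((∀ i, 𝒴 i) × (∀ i : {m // m ∉ I}, 𝒵 i) × V) → (∀ i : I, 𝒴 i) × (∀ i : S, 𝒵 i) × V :=
    fun x => (fun i => x.1 i, fun i => x.2.1 ⟨i, Finset.disjoint_right.1 hIS i.2⟩, x.2.2)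
  let κ : (∀ i : I, 𝒴 i) × (∀ i : S, 𝒵 i) × V → (∀ i : I, 𝒵 i) → ℝ :=
    fun c b => ∏ i : I, q i (c.1 i) (b i)
  have hκ : ∀ c, ∑ b, κ c b = 1 := fun c => by
    simp only [κ]
    rw [← Fintype.prod_sum]
    simp [hq1]
  let f : (∀ i, 𝒴 i) × (∀ i : {m // m ∉ I}, 𝒵 i) × V → ℝ :=
    fun x => p' (x.1, x.2.2) * ∏ i : {m // m ∉ I}, q i (x.1 i) (x.2.1 i)
  have hP : Pjoint p' q = (fun x => f x.1 * κ (X x.1) x.2) ∘ splitZbar I := by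
    funext ω
    simp only [Pjoint, Function.comp_apply, splitZbar, Equiv.coe_fn_mk, f, κ, X]
    rw [← Fintype.prod_subtype_mul_prod_subtype (· ∈ I), mul_left_comm, mul_comm]
    congr 1
    -- the two sides carry different `Fintype` instances on `{m // m ∈ I}`
    convert rfl
  have hswap : Function.Injective fun p : ((∀ i : I, 𝒴 i) × (∀ i : S, 𝒵 i) × V) × (∀ i : I, 𝒵 i) =>
      (p.1.1, p.2, p.1.2) := fun x y h => by simp_all [Prod.ext_iff]
  calc dist (Pjoint p' q) (fun ω => (Ybar I ω, Zbar I ω, ZbarV S ω)) (a, b, c)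
      = dist (Pjoint p' q) (fun ω => ((Ybar I ω, ZbarV S ω), Zbar I ω)) ((a, c), b) :=
        dist_comp_of_injective _ (fun ω => ((Ybar I ω, ZbarV S ω), Zbar I ω)) hswap ((a, c), b)
    _ = _ := by
      rw [hP]
      exact (dist_comp_equiv (splitZbar I) _ (fun x => (X x.1, x.2)) _).trans <|
        (dist_prod_eq_kernel_mul f X hκ (a, c) b).trans <|
          congrArg _ (dist_comp_equiv (splitZbar I) _ (fun x => X x.1) _).symm

lemma Hent_Ybar_Zbar_ZbarV_sub_Hent {p' : (∀ i, 𝒴 i) × V → ℝ} {q : ∀ m, 𝒴 m → 𝒵 m → ℝ}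
    (hp'0 : ∀ yv, 0 ≤ p' yv) (hq0 : ∀ m y z, 0 ≤ q m y z) (hq1 : ∀ m y, ∑ z, q m y z = 1)
    {I S : Finset (Fin M')} (hIS : Disjoint I S) :
    Hent (Pjoint p' q) (fun ω => (Ybar I ω, Zbar I ω, ZbarV S ω))
        - Hent (Pjoint p' q) (fun ω => (Ybar I ω, ZbarV S ω))
      = -∑ ω, Pjoint p' q ω * Real.logb 2 (∏ i : I, q i (ω.1 i) (ω.2.1 i)) :=
  Hent_sub_Hent_of_dist_eq_mul (Pjoint_nonneg hp'0 hq0) _ _ _ fun _ =>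
    dist_Ybar_Zbar_ZbarV_eq_prod_mul p' hq1 hIS _ _ _

end YZVChain

theorem statement_3_general (M' : ℕ) (𝒴 𝒵 : Fin M' → Type) [∀ i, Fintype (𝒴 i)]
    [∀ i, Fintype (𝒵 i)] (V : Type) [Fintype V]
    (p' : (∀ i, 𝒴 i) × V → ℝ) (q : ∀ m, 𝒴 m → 𝒵 m → ℝ)
    (hp'0 : ∀ yv, 0 ≤ p' yv)
    (hq0 : ∀ m y z, 0 ≤ q m y z) (hq1 : ∀ m y, ∑ z, q m y z = 1)
    (I I' : Finset (Fin M'))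
    (hII' : Disjoint I I') :
    condMI (Pjoint p' q) (Ybar I) (Zbar I) (ZbarV (I ∪ I')ᶜ)
      = condMI (Pjoint p' q) (Ybar I) (Zbar I) (ZbarV Iᶜ)
        + condMI (Pjoint p' q) (Zbar I) (Zbar I') (ZbarV (I ∪ I')ᶜ) := by
  set P := Pjoint p' q
  have hIJ : Disjoint I (I ∪ I')ᶜ := Finset.disjoint_left.2 fun _ hi hiJ =>
    Finset.mem_compl.1 hiJ (Finset.mem_union_left _ hi)
  have hcover : I' ∪ (I ∪ I')ᶜ = Iᶜ := by
    ext i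
    have := @Finset.disjoint_left.1 hII' i
    simp only [Finset.mem_union, Finset.mem_compl]
    tauto
  obtain ⟨g, hg, hgZ⟩ := exists_injective_comp_ZbarV_of_union_eq (𝒴 := 𝒴) hcover
  have hJ := Hent_Ybar_Zbar_ZbarV_sub_Hent hp'0 hq0 hq1 hIJ
  have hIc := Hent_Ybar_Zbar_ZbarV_sub_Hent hp'0 hq0 hq1 (disjoint_compl_right : Disjoint I Iᶜ)
  have hZZ : Hent P (fun ω => (Zbar I ω, Zbar I' ω, ZbarV (I ∪ I')ᶜ ω))
      = Hent P (fun ω => (Zbar I ω, ZbarV Iᶜ ω)) := by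
    simpa only [Prod.map_apply, id, hgZ] using
      Hent_comp_of_injective P (fun ω => (Zbar I ω, ZbarV Iᶜ ω)) (Function.injective_id.prodMap hg)
  have hZ : Hent P (fun ω => (Zbar I' ω, ZbarV (I ∪ I')ᶜ ω)) = Hent P (ZbarV Iᶜ) := by
    simpa only [hgZ] using Hent_comp_of_injective P (ZbarV Iᶜ) hg
  simp only [condMI]
  linarith

/-- Lemma B.1 (le:chain') of the paper: for disjoint nonempty `I, I' ⊆ {1,…,M'}`,
`I(Ȳ_I; Z̄_I | Z̄_{(I∪I')ᶜ}, V) = I(Ȳ_I; Z̄_I | Z̄_{Iᶜ}, V) + I(Z̄_I; Z̄_{I'} | Z̄_{(I∪I')ᶜ}, V)`. -/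
theorem statement_3 (M' : ℕ) (𝒴 𝒵 : Fin M' → Type) [∀ i, Fintype (𝒴 i)]
    [∀ i, Fintype (𝒵 i)] (V : Type) [Fintype V]
    (p' : (∀ i, 𝒴 i) × V → ℝ) (q : ∀ m, 𝒴 m → 𝒵 m → ℝ)
    (hp'0 : ∀ yv, 0 ≤ p' yv) (hp'1 : ∑ yv, p' yv = 1)
    (hq0 : ∀ m y z, 0 ≤ q m y z) (hq1 : ∀ m y, ∑ z, q m y z = 1)
    (I I' : Finset (Fin M')) (hI : I.Nonempty) (hI' : I'.Nonempty)
    (hII' : Disjoint I I') :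
    condMI (Pjoint p' q) (Ybar I) (Zbar I) (ZbarV (I ∪ I')ᶜ)
      = condMI (Pjoint p' q) (Ybar I) (Zbar I) (ZbarV Iᶜ)
        + condMI (Pjoint p' q) (Zbar I) (Zbar I') (ZbarV (I ∪ I')ᶜ) :=
  statement_3_general M' 𝒴 𝒵 V p' q hp'0 hq0 hq1 I I' hII'
end
end
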